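/- Let W : ℝ^d → ℂ be continuous and cell-periodic with unit cube cell [0,1]^d, and let k, m ∈ ℝ^d with (k − m)/(2π) ∉ ℤ^d. Then the large-cell average of e^{i(k−m)·ξ} W(ξ) vanishes: lim_{l→∞} (1/l^d) ∫_{[0,l]^d} e^{i(k−m)·ξ} W(ξ) dξ = 0. -/

import Mathlib

/-!
Put `f x = exp (i (k - m) ⬝ x) W x`. Periodicity of `W` makes `f` quasi-periodic in a direction `j`
with `k j - m j ∉ 2πℤ`: `f (x + e_j) = c f x` with `c = exp (i (k j - m j)) ≠ 1`. Translating the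
cube `[0, l]^d` by `e_j` multiplies its integral `I` by `c`, but changes the region only by two
slabs of thickness one, whose integrals are `O(l^(d-1))` since `f` is bounded. Hence
`‖c - 1‖ ‖I‖ = O(l^(d-1))` and `I / l^d → 0`.
-/

open MeasureTheory Filter

open Set Function Topology

section Periodic

variable {ι : Type*} [Fintype ι] [DecidableEq ι]

theorem periodic_intCast_of_periodic_single {β : Type*} {W : (ι → ℝ) → β}
    (hW : ∀ i, Periodic W (Pi.single i 1))
    (n : ι → ℤ) : Periodic W fun i => (n i : ℝ) := by
  have hn : (fun i => (n i : ℝ)) = ∑ i, n i • Pi.single i (1 : ℝ) := by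
    ext i
    simp [Pi.single_apply]
  rw [hn]
  exact Finset.sum_induction _ _ (fun _ _ => Periodic.add_period) (fun x => by rw [add_zero])
    fun i _ => (hW i).zsmul (n i)

theorem exists_norm_le_of_periodic_single {E : Type*} [SeminormedAddGroup E]
    {W : (ι → ℝ) → E} (hcont : Continuous W) (hW : ∀ i, Periodic W (Pi.single i 1)) :
    ∃ M, ∀ x, ‖W x‖ ≤ M := by
  obtain ⟨M, hM⟩ := (isCompact_Icc (a := (0 : ι → ℝ)) (b := 1)).exists_bound_of_continuousOn
    hcont.continuousOn
  refine ⟨M, fun x => ?_⟩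
  have hfract : x = (fun i => Int.fract (x i)) + fun i => (⌊x i⌋ : ℝ) := by
    ext i
    simp
  rw [hfract, periodic_intCast_of_periodic_single hW]
  exact hM _ ⟨fun i => Int.fract_nonneg _, fun i => (Int.fract_lt_one _).le⟩

end Periodic

theorem preimage_add_const_univ_pi_Ioc {ι α : Type*} [AddCommGroup α] [PartialOrder α]
    [IsOrderedAddMonoid α] (x y v : ι → α) :
    (· + v) ⁻¹' univ.pi (fun i => Ioc ((x + v) i) ((y + v) i)) =
      univ.pi fun i => Ioc (x i) (y i) := by
  ext z
  simp

section Boxes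

variable {ι : Type*} [Fintype ι] {E : Type*} [NormedAddCommGroup E] [NormedSpace ℂ E]
  {f : (ι → ℝ) → E}

theorem setIntegral_univ_pi_Ioc_add_of_map_add_eq_smul {v : ι → ℝ} {c : ℂ}
    (hf : ∀ z, f (z + v) = c • f z) (x y : ι → ℝ) :
    ∫ z in univ.pi (fun i => Ioc ((x + v) i) ((y + v) i)), f z =
      c • ∫ z in univ.pi fun i => Ioc (x i) (y i), f z := by
  rw [← (measurePreserving_add_right volume v).setIntegral_preimage_emb
    (measurableEmbedding_addRight v), preimage_add_const_univ_pi_Ioc]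
  simp_rw [hf, integral_smul]

theorem setIntegral_univ_pi_Ioc_split [DecidableEq ι] (hf : LocallyIntegrable f) {x y : ι → ℝ}
    (i₀ : ι) {m : ℝ} (hm : m ∈ Icc (x i₀) (y i₀)) :
    ∫ z in univ.pi (fun i => Ioc (x i) (y i)), f z =
      (∫ z in univ.pi (fun i => Ioc (x i) (update y i₀ m i)), f z) +
        ∫ z in univ.pi (fun i => Ioc (update x i₀ m i) (y i)), f z := by
  have hint : ∀ a b : ι → ℝ, IntegrableOn f (univ.pi fun i => Ioc (a i) (b i)) := fun a b =>
    (hf.integrableOn_isCompact isCompact_Icc).mono_set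
      (pi_univ_Icc a b ▸ pi_mono fun _ _ => Ioc_subset_Icc_self)
  have hdisj : Disjoint (univ.pi fun i => Ioc (x i) (update y i₀ m i))
      (univ.pi fun i => Ioc (update x i₀ m i) (y i)) := by
    refine disjoint_left.2 fun z hleft hright => ?_
    have h₁ := (hleft i₀ trivial).2
    have h₂ := (hright i₀ trivial).1
    simp only [update_self] at h₁ h₂
    linarith
  rw [← setIntegral_union hdisj (MeasurableSet.univ_pi fun _ => measurableSet_Ioc)
    (hint _ _) (hint _ _), pi_univ_Ioc_update_union x y i₀ m hm]

theorem norm_setIntegral_univ_pi_Ioc_le {M : ℝ} (hM : ∀ z, ‖f z‖ ≤ M) {x y : ι → ℝ}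
    (hxy : x ≤ y) :
    ‖∫ z in univ.pi (fun i => Ioc (x i) (y i)), f z‖ ≤ M * ∏ i, (y i - x i) := by
  have hfin : volume (univ.pi fun i => Ioc (x i) (y i)) < ⊤ := by
    rw [Real.volume_pi_Ioc]
    exact ENNReal.prod_lt_top fun _ _ => ENNReal.ofReal_lt_top
  simpa [measureReal_def, Real.volume_pi_Ioc_toReal hxy] using
    norm_setIntegral_le_of_norm_le_const hfin fun z _ => hM z

theorem norm_setIntegral_slab_le [DecidableEq ι] {M : ℝ} (hM : ∀ z, ‖f z‖ ≤ M) {l : ℝ}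
    (hl : 0 ≤ l) (j : ι) (t : ℝ) :
    ‖∫ z in univ.pi (fun i => Ioc (update (0 : ι → ℝ) j t i) (update (fun _ => l) j (t + 1) i)),
      f z‖ ≤ M * l ^ (Fintype.card ι - 1) := by
  refine (norm_setIntegral_univ_pi_Ioc_le hM fun i => ?_).trans_eq ?_
  · rcases eq_or_ne i j with rfl | h
    · simp
    · simp [h, hl]
  · have hwidth : ∀ i, update (fun _ => l) j (t + 1) i - update (0 : ι → ℝ) j t i =
        update (fun _ => l) j 1 i := by
      intro i
      rcases eq_or_ne i j with rfl | h
      · simp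
      · simp [h]
    simp_rw [hwidth, Finset.prod_update_of_mem (Finset.mem_univ j)]
    simp [Finset.card_sdiff]

theorem norm_sub_one_mul_norm_setIntegral_cube_le [DecidableEq ι] (hf : LocallyIntegrable f)
    {M : ℝ} (hM : ∀ z, ‖f z‖ ≤ M) {j : ι} {c : ℂ} (hfj : ∀ z, f (z + Pi.single j 1) = c • f z)
    {l : ℝ} (hl : 0 ≤ l) :
    ‖c - 1‖ * ‖∫ z in univ.pi (fun _ => Icc 0 l), f z‖ ≤ 2 * M * l ^ (Fintype.card ι - 1) := by
  set L : ι → ℝ := fun _ => l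
  set Q := ∫ z in univ.pi (fun i => Ioc ((0 : ι → ℝ) i) (L i)), f z
  set S : ℝ → E := fun t =>
    ∫ z in univ.pi (fun i => Ioc (update (0 : ι → ℝ) j t i) (update L j (t + 1) i)), f z
  have hcube : ∫ z in univ.pi (fun _ => Icc 0 l), f z = Q :=
    (setIntegral_congr_set ((pi_univ_Icc (0 : ι → ℝ) L).symm ▸ Measure.univ_pi_Ioc_ae_eq_Icc)).symm
  have hslab : ∀ t, ‖S t‖ ≤ M * l ^ (Fintype.card ι - 1) := norm_setIntegral_slab_le hM hl j
  -- The cube stretched to length `l + 1` in direction `j` is split in two ways: bottom slab and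
  -- translated cube, or cube and top slab.
  have hbottom := setIntegral_univ_pi_Ioc_split hf (x := 0) (y := update L j (l + 1)) j
    (m := 1) ⟨by simp, by simp [hl]⟩
  have htop := setIntegral_univ_pi_Ioc_split hf (x := 0) (y := update L j (l + 1)) j
    (m := l) ⟨by simp [hl], by simp⟩
  have hshift : c • Q = ∫ z in univ.pi (fun i => Ioc (update (0 : ι → ℝ) j 1 i)
      (update L j (l + 1) i)), f z := by
    have hL : L + Pi.single j 1 = update L j (l + 1) := by
      ext i
      rcases eq_or_ne i j with rfl | h
      · simp [L]
      · simp [h]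
    rw [← setIntegral_univ_pi_Ioc_add_of_map_add_eq_smul hfj 0 L, hL, zero_add]
    rfl
  have hdiff : (c - 1) • Q = S l - S 0 := by
    have hS0 : S 0 = ∫ z in univ.pi (fun i => Ioc ((0 : ι → ℝ) i) (update L j 1 i)), f z := by
      simp [S]
    rw [update_idem] at hbottom htop
    rw [update_eq_self j L] at htop
    rw [sub_smul, one_smul, sub_eq_sub_iff_add_eq_add, hS0, hshift, add_comm, ← hbottom, htop,
      add_comm]
  calc ‖c - 1‖ * ‖∫ z in univ.pi (fun _ => Icc 0 l), f z‖ = ‖S l - S 0‖ := by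
        rw [hcube, ← norm_smul, hdiff]
    _ ≤ ‖S l‖ + ‖S 0‖ := norm_sub_le _ _
    _ ≤ 2 * M * l ^ (Fintype.card ι - 1) := by linarith [hslab l, hslab 0]

end Boxes

theorem tendsto_inv_pow_smul_of_norm_le_mul_pow_sub_one {E : Type*} [SeminormedAddCommGroup E]
    [NormedSpace ℝ E] {d : ℕ} (hd : 0 < d) {a : ℕ → E} {C : ℝ}
    (ha : ∀ l : ℕ, ‖a l‖ ≤ C * (l : ℝ) ^ (d - 1)) :
    Tendsto (fun l : ℕ => ((l : ℝ) ^ d)⁻¹ • a l) atTop (𝓝 0) := by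
  refine squeeze_zero_norm' ?_ (by simpa using tendsto_inv_atTop_nhds_zero_nat.const_mul C)
  filter_upwards [eventually_gt_atTop 0] with l hl
  have hl' : (0 : ℝ) < l := Nat.cast_pos.2 hl
  calc ‖((l : ℝ) ^ d)⁻¹ • a l‖ = ‖a l‖ / (l : ℝ) ^ d := by
        rw [norm_smul, norm_inv, norm_pow, Real.norm_natCast, inv_mul_eq_div]
    _ ≤ C * (l : ℝ) ^ (d - 1) / (l : ℝ) ^ d := by gcongr; exact ha l
    _ = C * (l : ℝ)⁻¹ := by
        rw [← pow_sub_one_mul hd.ne']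
        field_simp

theorem Complex.exp_I_mul_ofReal_ne_one {t : ℝ} (ht : ¬ ∃ n : ℤ, t = 2 * Real.pi * n) :
    Complex.exp (Complex.I * t) ≠ 1 := by
  rw [Ne, Complex.exp_eq_one_iff]
  rintro ⟨n, hn⟩
  refine ht ⟨n, ?_⟩
  have ht' : (t : ℂ) = ((2 * Real.pi * n : ℝ) : ℂ) := by
    apply mul_left_cancel₀ Complex.I_ne_zero
    rw [hn]
    push_cast
    ring
  exact_mod_cast ht'

theorem coupling_coefficient_vanishes_general
    (d : ℕ) (W : (Fin d → ℝ) → ℂ) (hW : Continuous W)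
    (hper : ∀ (x : Fin d → ℝ) (i : Fin d), W (x + Pi.single i 1) = W x)
    (k m : Fin d → ℝ)
    (hkm : ∃ j, ¬ ∃ n : ℤ, k j - m j = 2 * Real.pi * n) :
    Filter.Tendsto
      (fun l : ℕ => ((l : ℝ) ^ d)⁻¹ •
        ∫ x in Set.univ.pi (fun _ : Fin d => Set.Icc (0:ℝ) (l : ℝ)),
          Complex.exp (Complex.I * ((∑ i, (k i - m i) * x i : ℝ) : ℂ)) * W x)
      Filter.atTop (nhds 0) := by
  obtain ⟨j, hj⟩ := hkm
  set f : (Fin d → ℝ) → ℂ := fun x =>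
    Complex.exp (Complex.I * ((∑ i, (k i - m i) * x i : ℝ) : ℂ)) * W x
  set c := Complex.exp (Complex.I * ((k j - m j : ℝ) : ℂ))
  have hfc : Continuous f := by fun_prop
  have hfj : ∀ x, f (x + Pi.single j 1) = c • f x := by
    intro x
    have hsum : ∑ i, (k i - m i) * (x + Pi.single j 1 : Fin d → ℝ) i =
        ∑ i, (k i - m i) * x i + (k j - m j) := by
      simp [mul_add, Finset.sum_add_distrib, Pi.single_apply]
    simp only [f, c, smul_eq_mul, hsum, hper, Complex.ofReal_add, mul_add, Complex.exp_add]
    ring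
  obtain ⟨M, hM⟩ := exists_norm_le_of_periodic_single hW fun i x => hper x i
  have hfM : ∀ x, ‖f x‖ ≤ M := fun x => by
    simpa only [f, norm_mul, Complex.norm_exp_I_mul_ofReal, one_mul] using hM x
  have hc : 0 < ‖c - 1‖ := norm_pos_iff.2 (sub_ne_zero.2 (Complex.exp_I_mul_ofReal_ne_one hj))
  refine tendsto_inv_pow_smul_of_norm_le_mul_pow_sub_one j.pos (C := 2 * M / ‖c - 1‖) fun l => ?_
  rw [div_mul_eq_mul_div, le_div_iff₀' hc]
  simpa using norm_sub_one_mul_norm_setIntegral_cube_le hfc.locallyIntegrable hfM hfj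
    (Nat.cast_nonneg l)

theorem coupling_coefficient_vanishes
    (d : ℕ) (hd : 0 < d) (W : (Fin d → ℝ) → ℂ) (hW : Continuous W)
    (hper : ∀ (x : Fin d → ℝ) (i : Fin d), W (x + Pi.single i 1) = W x)
    (k m : Fin d → ℝ)
    (hkm : ∃ j, ¬ ∃ n : ℤ, k j - m j = 2 * Real.pi * n) :
    Filter.Tendsto
      (fun l : ℕ => ((l : ℝ) ^ d)⁻¹ •
        ∫ x in Set.univ.pi (fun _ : Fin d => Set.Icc (0:ℝ) (l : ℝ)),
          Complex.exp (Complex.I * ((∑ i, (k i - m i) * x i : ℝ) : ℂ)) * W x)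
      Filter.atTop (nhds 0) :=
  coupling_coefficient_vanishes_general d W hW hper k m hkm
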